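/- Let 0 ≤ S ≤ T be positive operators on a real Banach lattice with r(T) = r(S) and ST = TS. Suppose Sx₀ = r(S)x₀ and S*x₀* = r(S)x₀* for some x₀ > 0 and x₀* > 0, and that S is ideal irreducible. Then T = S. -/

import Mathlib

open scoped ENNReal

variable {X : Type*}

def IsPositiveOp [NormedAddCommGroup X] [Lattice X] [IsOrderedAddMonoid X] [HasSolidNorm X]
    [NormedSpace ℝ X]
    (T : X →L[ℝ] X) : Prop := ∀ x : X, 0 ≤ x → 0 ≤ T x

def IsClosedIdeal [NormedAddCommGroup X] [Lattice X] [IsOrderedAddMonoid X] [HasSolidNorm X]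
    [NormedSpace ℝ X]
    (J : Submodule ℝ X) : Prop :=
  IsClosed (J : Set X) ∧ ∀ x y : X, |y| ≤ |x| → x ∈ J → y ∈ J

def IdealIrreducible [NormedAddCommGroup X] [Lattice X] [IsOrderedAddMonoid X] [HasSolidNorm X]
    [NormedSpace ℝ X]
    (T : X →L[ℝ] X) : Prop :=
  ∀ J : Submodule ℝ X, IsClosedIdeal J → (∀ x ∈ J, T x ∈ J) → J = ⊥ ∨ J = ⊤

/-- A band: a solid submodule closed under existing suprema. -/
def IsBand [NormedAddCommGroup X] [Lattice X] [IsOrderedAddMonoid X] [HasSolidNorm X]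
    [NormedSpace ℝ X]
    (J : Submodule ℝ X) : Prop :=
  (∀ x y : X, |y| ≤ |x| → x ∈ J → y ∈ J) ∧
    ∀ (A : Set X) (x : X), A ⊆ (J : Set X) → IsLUB A x → x ∈ J

def BandIrreducible [NormedAddCommGroup X] [Lattice X] [IsOrderedAddMonoid X] [HasSolidNorm X]
    [NormedSpace ℝ X]
    (T : X →L[ℝ] X) : Prop :=
  ∀ J : Submodule ℝ X, IsBand J → (∀ x ∈ J, T x ∈ J) → J = ⊥ ∨ J = ⊤

def QuasiInterior [NormedAddCommGroup X] [Lattice X] [IsOrderedAddMonoid X] [HasSolidNorm X]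
    [NormedSpace ℝ X]
    (x : X) : Prop :=
  closure {y : X | ∃ c : ℝ, |y| ≤ c • x} = Set.univ

/-- A weak (order) unit. -/
def WeakUnit [NormedAddCommGroup X] [Lattice X] [IsOrderedAddMonoid X] [HasSolidNorm X]
    [NormedSpace ℝ X]
    (x : X) : Prop := 0 < x ∧ ∀ y : X, |y| ⊓ x = 0 → y = 0

def IsPositiveFunc [NormedAddCommGroup X] [Lattice X] [IsOrderedAddMonoid X] [HasSolidNorm X]
    [NormedSpace ℝ X]
    (f : StrongDual ℝ X) : Prop := ∀ x : X, 0 ≤ x → 0 ≤ f x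

def StrictlyPositiveFunc [NormedAddCommGroup X] [Lattice X] [IsOrderedAddMonoid X] [HasSolidNorm X]
    [NormedSpace ℝ X]
    (f : StrongDual ℝ X) : Prop := ∀ x : X, 0 < x → 0 < f x

noncomputable def adjOp [NormedAddCommGroup X] [Lattice X] [IsOrderedAddMonoid X] [HasSolidNorm X]
    [NormedSpace ℝ X]
    (T : X →L[ℝ] X) : StrongDual ℝ X →L[ℝ] StrongDual ℝ X :=
  (ContinuousLinearMap.compL ℝ X X ℝ).flip T

/-- `T` is σ-order continuous: `x_n ↓ 0` implies `T x_n ↓ 0`. -/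
def SigmaOrderContinuousOp [NormedAddCommGroup X] [Lattice X] [IsOrderedAddMonoid X] [HasSolidNorm X]
    [NormedSpace ℝ X]
    (T : X →L[ℝ] X) : Prop :=
  ∀ u : ℕ → X, Antitone u → IsGLB (Set.range u) 0 →
    IsGLB (Set.range fun n => T (u n)) 0

/-- A σ-order continuous functional. -/
def SigmaOrderContinuousFunc [NormedAddCommGroup X] [Lattice X] [IsOrderedAddMonoid X] [HasSolidNorm X]
    [NormedSpace ℝ X]
    (f : StrongDual ℝ X) : Prop :=
  ∀ u : ℕ → X, Antitone u → IsGLB (Set.range u) 0 →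
    Filter.Tendsto (fun n => f (u n)) Filter.atTop (nhds 0)

/-- A set is relatively weakly compact. -/
def RelWeaklyCompact [NormedAddCommGroup X] [Lattice X] [IsOrderedAddMonoid X] [HasSolidNorm X]
    [NormedSpace ℝ X]
    (s : Set X) : Prop :=
  IsCompact (closure ((toWeakSpace ℝ X) '' s))

/-- `T` is order weakly compact: `T[0,x]` is relatively weakly compact for all `x > 0`. -/
def OrderWeaklyCompactOp [NormedAddCommGroup X] [Lattice X] [IsOrderedAddMonoid X] [HasSolidNorm X]
    [NormedSpace ℝ X]
    (T : X →L[ℝ] X) : Prop :=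
  ∀ x : X, 0 < x → RelWeaklyCompact (T '' Set.Icc 0 x)

/-!
Ideal irreducibility of `S` makes the positive eigenfunctional `f₀` strictly positive (its null
ideal is closed and `S`-invariant) and every positive eigenvector a weak unit (it generates a
dense ideal). Hence `r(S)` is geometrically simple: for an eigenvector `w` with `f₀ w = 0`, the
elements `|w| ± w` are disjoint positive eigenvectors, which forces `f₀ |w| = 0`. As `T` commutes
with `S`, `T x₀` is an eigenvector of `S`, so `T x₀ = t x₀`; then `r(S) ≤ t` by applying `f₀` to
`S x₀ ≤ T x₀`, and `t ≤ r(T) = r(S)`. Finally the null ideal of the positive operator `T - S` is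
closed, `S`-invariant and contains `x₀`, so `T - S = 0`.
-/

open Filter Topology

section LatticeModule

variable {M : Type*} [AddCommGroup M] [Lattice M] [IsOrderedAddMonoid M]

lemma eq_zero_of_abs_nonpos {x : M} (h : |x| ≤ 0) : x = 0 :=
  le_antisymm (abs_le'.1 h).1 (neg_nonpos.1 (abs_le'.1 h).2)

variable [Module ℝ M]

lemma two_pow_inv_smul_nonneg {x : M} (hx : 0 ≤ x) (k : ℕ) : 0 ≤ ((2 : ℝ) ^ k)⁻¹ • x := by
  induction k with
  | zero => simpa using hx
  | succ k ih =>
    refine nsmul_two_semiclosed ?_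
    rwa [← Nat.cast_smul_eq_nsmul ℝ, smul_smul, pow_succ, mul_inv, mul_comm, mul_assoc,
      Nat.cast_ofNat, inv_mul_cancel₀ two_ne_zero, mul_one]

variable [PosSMulMono ℝ M]

lemma abs_smul_of_posSMulMono (c : ℝ) (x : M) : |c • x| = |c| • |x| := by
  wlog hc : 0 ≤ c generalizing c x
  · simpa [abs_of_nonpos (not_le.1 hc).le] using this (-c) (-x) (by linarith)
  rcases hc.eq_or_lt with rfl | hc
  · simp
  · rw [abs_of_pos hc, abs, abs, ← smul_neg]
    exact ((OrderIso.smulRight hc).map_sup x (-x)).symm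

lemma inf_le_zero_of_le_smul {u v w : M} (hu : 0 ≤ u) (hv : 0 ≤ v) (huv : u ⊓ v = 0) {c : ℝ}
    (hw : w ≤ c • v) : u ⊓ w ≤ 0 := by
  set d := max c 1
  have hd : 0 < d := lt_max_of_lt_right one_pos
  calc u ⊓ w ≤ d • u ⊓ d • v :=
        inf_le_inf (le_smul_of_one_le_left hu (le_max_right c 1))
          (hw.trans (smul_le_smul_of_nonneg_right (le_max_left c 1) hv))
    _ = d • (u ⊓ v) := ((OrderIso.smulRight hd).map_inf u v).symm
    _ = 0 := by rw [huv, smul_zero]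

end LatticeModule

section NormedLattice

variable [NormedAddCommGroup X] [Lattice X] [IsOrderedAddMonoid X] [HasSolidNorm X]

lemma continuous_abs_of_hasSolidNorm : Continuous (fun x : X => |x|) :=
  continuous_id.sup continuous_neg

variable [NormedSpace ℝ X]

-- Only addition is assumed compatible with the order; scalar monotonicity comes from dyadic
-- approximation and the closedness of the positive cone.
lemma smul_nonneg_of_hasSolidNorm {c : ℝ} (hc : 0 ≤ c) {x : X} (hx : 0 ≤ x) : 0 ≤ c • x := by
  have hdyadic (k : ℕ) : 0 ≤ ((⌊c * 2 ^ k⌋₊ : ℝ) / 2 ^ k) • x := by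
    rw [div_eq_mul_inv, mul_smul, Nat.cast_smul_eq_nsmul]
    exact nsmul_nonneg (two_pow_inv_smul_nonneg hx k) _
  have hlim : Tendsto (fun k : ℕ => (⌊c * 2 ^ k⌋₊ : ℝ) / 2 ^ k) atTop (𝓝 c) :=
    (tendsto_nat_floor_mul_div_atTop hc).comp (tendsto_pow_atTop_atTop_of_one_lt one_lt_two)
  exact isClosed_nonneg.mem_of_tendsto (hlim.smul_const x) (Eventually.of_forall hdyadic)

instance HasSolidNorm.toPosSMulMono : PosSMulMono ℝ X :=
  PosSMulMono.of_smul_nonneg fun _ hc _ hx => smul_nonneg_of_hasSolidNorm hc hx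

lemma isClosedIdeal_topologicalClosure {I : Submodule ℝ X}
    (hI : ∀ x y : X, |y| ≤ |x| → x ∈ I → y ∈ I) : IsClosedIdeal I.topologicalClosure := by
  refine ⟨I.isClosed_topologicalClosure, fun x y hxy hx => ?_⟩
  rw [← SetLike.mem_coe, Submodule.topologicalClosure_coe] at hx ⊢
  -- `y` is the limit of the truncations `(y ⊓ |xₙ|) ⊔ -|xₙ|`, which lie in `I` when `xₙ` does.
  let g : X → X := fun z => y ⊓ |z| ⊔ -|z|
  have hg : Continuous g :=
    (continuous_const.inf continuous_abs_of_hasSolidNorm).sup continuous_abs_of_hasSolidNorm.neg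
  have hgI : Set.MapsTo g I I := fun z hz =>
    hI z _ (abs_le'.2 ⟨sup_le inf_le_right (neg_le_self (abs_nonneg z)),
      neg_le.1 le_sup_right⟩) hz
  have hgx : g x = y := by
    simp only [g, inf_eq_left.2 ((le_abs_self y).trans hxy)]
    exact sup_eq_left.2 ((neg_le_neg hxy).trans (neg_le.mp (neg_le_abs y)))
  exact hgx ▸ map_mem_closure hg hx hgI

end NormedLattice

lemma Submodule.apply_mem_topologicalClosure {E : Type*} [NormedAddCommGroup E] [NormedSpace ℝ E]
    {I : Submodule ℝ E} {S : E →L[ℝ] E} (hS : ∀ x ∈ I, S x ∈ I) {x : E}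
    (hx : x ∈ I.topologicalClosure) : S x ∈ I.topologicalClosure :=
  I.topologicalClosure_minimal (t := I.topologicalClosure.comap (S : E →ₗ[ℝ] E))
    (fun y hy => Submodule.mem_comap.2 (I.le_topologicalClosure (hS y hy)))
    (I.isClosed_topologicalClosure.preimage S.continuous) hx

lemma mem_spectrum_of_apply_eq_smul {E : Type*} [NormedAddCommGroup E] [NormedSpace ℝ E]
    {T : E →L[ℝ] E} {x : E} (hx : x ≠ 0) {t : ℝ} (h : T x = t • x) : t ∈ spectrum ℝ T := by
  refine fun ⟨u, hu⟩ => hx ?_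
  have hker : (algebraMap ℝ (E →L[ℝ] E) t - T) x = 0 := by simp [h]
  calc x = (↑u⁻¹ * ↑u : E →L[ℝ] E) x := by rw [u.inv_mul]; rfl
    _ = (↑u⁻¹ : E →L[ℝ] E) ((algebraMap ℝ (E →L[ℝ] E) t - T) x) := by rw [← hu]; rfl
    _ = 0 := by rw [hker, map_zero]

lemma le_toReal_spectralRadius {A : Type*} [Ring A] [Algebra ℝ A] {a : A}
    (ha : spectralRadius ℝ a ≠ ⊤) {t : ℝ} (ht : t ∈ spectrum ℝ a) :
    t ≤ (spectralRadius ℝ a).toReal :=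
  (le_abs_self t).trans <| by
    simpa using ENNReal.toReal_mono ha (le_iSup₂ (α := ℝ≥0∞) t ht)

section PositiveMaps

variable [NormedAddCommGroup X] [Lattice X] [IsOrderedAddMonoid X] [NormedSpace ℝ X]
  {Y : Type*} [NormedAddCommGroup Y] [Lattice Y] [IsOrderedAddMonoid Y] [NormedSpace ℝ Y]
  {φ : X →L[ℝ] Y}

lemma monotone_of_map_nonneg (hφ : ∀ x, 0 ≤ x → 0 ≤ φ x) : Monotone φ := fun a b h => by
  simpa using hφ (b - a) (sub_nonneg.2 h)

lemma abs_map_le_map_abs (hφ : ∀ x, 0 ≤ x → 0 ≤ φ x) (x : X) : |φ x| ≤ φ |x| :=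
  abs_le'.2 ⟨monotone_of_map_nonneg hφ (le_abs_self x),
    by simpa using monotone_of_map_nonneg hφ (neg_le_abs x)⟩

variable [HasSolidNorm X]

def nullIdeal (φ : X →L[ℝ] Y) (hφ : ∀ x, 0 ≤ x → 0 ≤ φ x) : Submodule ℝ X where
  carrier := {x | φ |x| = 0}
  zero_mem' := by simp
  add_mem' {a b} ha hb := le_antisymm
    (calc φ |a + b| ≤ φ (|a| + |b|) := monotone_of_map_nonneg hφ (abs_add_le a b)
      _ = 0 := by simp_all)
    (hφ _ (abs_nonneg _))
  smul_mem' c x hx := by simp_all [abs_smul_of_posSMulMono]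

variable {hφ : ∀ x, 0 ≤ x → 0 ≤ φ x}

lemma mem_nullIdeal {x : X} : x ∈ nullIdeal φ hφ ↔ φ |x| = 0 := Iff.rfl

lemma isClosedIdeal_nullIdeal : IsClosedIdeal (nullIdeal φ hφ) :=
  ⟨isClosed_eq (φ.continuous.comp continuous_abs_of_hasSolidNorm) continuous_const,
    fun _ y hxy hx => le_antisymm (hx ▸ monotone_of_map_nonneg hφ hxy) (hφ _ (abs_nonneg y))⟩

lemma eq_zero_of_nullIdeal_eq_top (h : nullIdeal φ hφ = ⊤) : φ = 0 := by
  ext x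
  have hx : φ |x| = 0 := mem_nullIdeal.1 (h ▸ Submodule.mem_top)
  exact eq_zero_of_abs_nonpos (hx ▸ abs_map_le_map_abs hφ x)

end PositiveMaps

section IdealIrreducible

variable [NormedAddCommGroup X] [Lattice X] [IsOrderedAddMonoid X] [HasSolidNorm X]
  [NormedSpace ℝ X] {S : X →L[ℝ] X}

lemma adjOp_apply (T : X →L[ℝ] X) (f : StrongDual ℝ X) (x : X) : adjOp T f x = f (T x) := rfl

lemma StrictlyPositiveFunc.eq_zero_of_nonneg {f : StrongDual ℝ X} (hf : StrictlyPositiveFunc f)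
    {x : X} (hx : 0 ≤ x) (hfx : f x = 0) : x = 0 :=
  by_contra fun hne => (hf x (hx.lt_of_ne' hne)).ne' hfx

def principalIdeal (v : X) : Submodule ℝ X where
  carrier := {x | ∃ c : ℝ, |x| ≤ c • v}
  zero_mem' := ⟨0, by simp⟩
  add_mem' := fun ⟨c, hc⟩ ⟨d, hd⟩ =>
    ⟨c + d, (abs_add_le _ _).trans (add_smul c d v ▸ add_le_add hc hd)⟩
  smul_mem' a _ := fun ⟨c, hc⟩ => ⟨|a| * c, by
    rw [abs_smul_of_posSMulMono, mul_smul]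
    exact smul_le_smul_of_nonneg_left hc (abs_nonneg a)⟩

lemma IdealIrreducible.eq_top_of_mem (hirr : IdealIrreducible S) {J : Submodule ℝ X}
    (hJ : IsClosedIdeal J) (hSJ : ∀ x ∈ J, S x ∈ J) {x : X} (hx : x ≠ 0) (hxJ : x ∈ J) :
    J = ⊤ :=
  (hirr J hJ hSJ).resolve_left fun h => hx ((Submodule.mem_bot ℝ).1 (h ▸ hxJ))

lemma apply_mem_nullIdeal_of_commute {D : X →L[ℝ] X} (hD : IsPositiveOp D) (hS : IsPositiveOp S)
    (hDS : ∀ x, D (S x) = S (D x)) {x : X} (hx : x ∈ nullIdeal D hD) : S x ∈ nullIdeal D hD :=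
  le_antisymm
    (calc D |S x| ≤ D (S |x|) := monotone_of_map_nonneg hD (abs_map_le_map_abs hS x)
      _ = 0 := by rw [hDS, mem_nullIdeal.1 hx, map_zero])
    (hD _ (abs_nonneg _))

lemma IdealIrreducible.eq_zero_of_commute (hirr : IdealIrreducible S) (hS : IsPositiveOp S)
    {D : X →L[ℝ] X} (hD : IsPositiveOp D) (hDS : ∀ x, D (S x) = S (D x)) {x₀ : X}
    (hx₀ : 0 < x₀) (hDx₀ : D x₀ = 0) : D = 0 :=
  eq_zero_of_nullIdeal_eq_top <| hirr.eq_top_of_mem isClosedIdeal_nullIdeal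
    (fun _ => apply_mem_nullIdeal_of_commute hD hS hDS) hx₀.ne'
    (mem_nullIdeal.2 (by rw [abs_of_nonneg hx₀.le, hDx₀]))

-- `X` need not be complete, so `r(S) = ⊤` is not excluded a priori; then `heig` says `S x₀ = 0`
-- because `⊤.toReal = 0`.
lemma IdealIrreducible.spectralRadius_ne_top (hirr : IdealIrreducible S) (hS : IsPositiveOp S)
    {x₀ : X} (hx₀ : 0 < x₀) (heig : S x₀ = (spectralRadius ℝ S).toReal • x₀) :
    spectralRadius ℝ S ≠ ⊤ := by
  intro htop
  have hS0 : S = 0 := hirr.eq_zero_of_commute hS hS (fun _ => rfl) hx₀ (by simp [heig, htop])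
  simp [hS0] at htop

lemma IdealIrreducible.strictlyPositiveFunc (hirr : IdealIrreducible S) (hS : IsPositiveOp S)
    {f : StrongDual ℝ X} (hf : IsPositiveFunc f) (hf0 : f ≠ 0) {c : ℝ}
    (hfS : adjOp S f = c • f) : StrictlyPositiveFunc f := by
  have hSN (x : X) (hx : x ∈ nullIdeal f hf) : S x ∈ nullIdeal f hf :=
    le_antisymm
      (calc f |S x| ≤ f (S |x|) := monotone_of_map_nonneg hf (abs_map_le_map_abs hS x)
        _ = c * f |x| := by rw [← adjOp_apply, hfS]; rfl
        _ = 0 := by rw [mem_nullIdeal.1 hx, mul_zero])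
      (hf _ (abs_nonneg _))
  rcases hirr _ isClosedIdeal_nullIdeal hSN with hbot | htop
  · refine fun x hx => (hf x hx.le).lt_of_ne fun hfx => hx.ne' ?_
    rw [← Submodule.mem_bot ℝ, ← hbot]
    exact mem_nullIdeal.2 (by rw [abs_of_nonneg hx.le, hfx])
  · exact absurd (eq_zero_of_nullIdeal_eq_top htop) hf0

lemma IdealIrreducible.weakUnit_of_eigenvector (hirr : IdealIrreducible S) (hS : IsPositiveOp S)
    {v : X} (hv : 0 < v) {c : ℝ} (hSv : S v = c • v) : WeakUnit v := by
  set I := principalIdeal v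
  have hSI (x : X) : x ∈ I → S x ∈ I := fun ⟨d, hd⟩ => ⟨d * c,
    calc |S x| ≤ S |x| := abs_map_le_map_abs hS x
      _ ≤ S (d • v) := monotone_of_map_nonneg hS hd
      _ = (d * c) • v := by rw [map_smul, hSv, smul_smul]⟩
  have hdense : I.topologicalClosure = ⊤ :=
    hirr.eq_top_of_mem (isClosedIdeal_topologicalClosure fun _ _ hyx ⟨d, hd⟩ => ⟨d, hyx.trans hd⟩)
      (fun _ => Submodule.apply_mem_topologicalClosure hSI) hv.ne'
      (I.le_topologicalClosure ⟨1, by rw [abs_of_nonneg hv.le, one_smul]⟩)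
  refine ⟨hv, fun y hyv => eq_zero_of_abs_nonpos ?_⟩
  have hdisj : closure (I : Set X) ⊆ {x | |y| ⊓ |x| = 0} :=
    closure_minimal
      (fun _ ⟨d, hd⟩ => le_antisymm (inf_le_zero_of_le_smul (abs_nonneg y) hv.le hyv hd)
        (le_inf (abs_nonneg _) (abs_nonneg _)))
      (isClosed_eq (continuous_const.inf continuous_abs_of_hasSolidNorm) continuous_const)
  have hy : y ∈ closure (I : Set X) := by
    rw [← Submodule.topologicalClosure_coe, hdense]; trivial
  have hyy : |y| ⊓ |y| = 0 := hdisj hy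
  exact (inf_idem |y| ▸ hyy).le

lemma apply_abs_eq_smul_abs_of_eigenvector (hS : IsPositiveOp S) {f : StrongDual ℝ X}
    (hf : StrictlyPositiveFunc f) {r : ℝ} (hr : 0 ≤ r) (hfS : ∀ x, f (S x) = r * f x) {w : X}
    (hw : S w = r • w) : S |w| = r • |w| := by
  have hle : r • |w| ≤ S |w| := by
    simpa [hw, abs_smul_of_posSMulMono, abs_of_nonneg hr] using abs_map_le_map_abs hS w
  refine sub_eq_zero.1 (hf.eq_zero_of_nonneg (sub_nonneg.2 hle) ?_)
  rw [map_sub, hfS, map_smul, smul_eq_mul, sub_self]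

lemma IdealIrreducible.eq_zero_of_eigenvector (hirr : IdealIrreducible S) (hS : IsPositiveOp S)
    {f : StrongDual ℝ X} (hf : StrictlyPositiveFunc f) {r : ℝ} (hr : 0 ≤ r)
    (hfS : ∀ x, f (S x) = r * f x) {w : X} (hw : S w = r • w) (hfw : f w = 0) : w = 0 := by
  have habs := apply_abs_eq_smul_abs_of_eigenvector hS hf hr hfS hw
  suffices f |w| = 0 from eq_zero_of_abs_nonpos (hf.eq_zero_of_nonneg (abs_nonneg w) this).le
  -- `|w| + w` and `|w| - w` are disjoint, positive, and take the value `f |w|` under `f`.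
  set p := |w| + w
  set n := |w| - w
  have hp : 0 ≤ p := neg_le_iff_add_nonneg'.1 (neg_le.mp (neg_le_abs w))
  have hn : 0 ≤ n := sub_nonneg.2 (le_abs_self w)
  have hnp : |n| ⊓ p = 0 := by
    rw [abs_of_nonneg hn, show n = |w| + -w from sub_eq_add_neg _ _, ← add_inf,
      ← neg_neg (-w ⊓ w), neg_inf, neg_neg]
    exact add_neg_cancel _
  rcases hp.eq_or_lt with hp0 | hp0
  · simpa [p, hfw] using congrArg f hp0.symm
  · have hSp : S p = r • p := by rw [map_add, habs, hw, smul_add]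
    have hn0 : n = 0 := (hirr.weakUnit_of_eigenvector hS hp0 hSp).2 n hnp
    simpa [n, hfw] using congrArg f hn0

lemma IdealIrreducible.exists_eq_smul_of_eigenvector (hirr : IdealIrreducible S)
    (hS : IsPositiveOp S) {f : StrongDual ℝ X} (hf : StrictlyPositiveFunc f) {r : ℝ} (hr : 0 ≤ r)
    (hfS : ∀ x, f (S x) = r * f x) {x₀ : X} (hx₀ : 0 < x₀) (hSx₀ : S x₀ = r • x₀) {z : X}
    (hz : S z = r • z) : ∃ t : ℝ, z = t • x₀ := by
  have hfx₀ : f x₀ ≠ 0 := (hf x₀ hx₀).ne'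
  refine ⟨f z / f x₀, sub_eq_zero.1 (hirr.eq_zero_of_eigenvector hS hf hr hfS ?_ ?_)⟩
  · rw [map_sub, map_smul, hz, hSx₀, smul_sub, smul_comm]
  · rw [map_sub, map_smul, smul_eq_mul, div_mul_cancel₀ _ hfx₀, sub_self]

end IdealIrreducible

theorem stmt19_general [NormedAddCommGroup X] [Lattice X] [IsOrderedAddMonoid X] [HasSolidNorm X]
    [NormedSpace ℝ X]
    (S T : X →L[ℝ] X) (hS : IsPositiveOp S)
    (hST : ∀ x : X, 0 ≤ x → S x ≤ T x)
    (hr : spectralRadius ℝ T = spectralRadius ℝ S)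
    (hcomm : S * T = T * S)
    (x₀ : X) (hx₀ : 0 < x₀)
    (heig : S x₀ = (spectralRadius ℝ S).toReal • x₀)
    (f₀ : StrongDual ℝ X) (hf₀ : IsPositiveFunc f₀) (hf₀0 : f₀ ≠ 0)
    (heig' : adjOp S f₀ = (spectralRadius ℝ S).toReal • f₀)
    (hirr : IdealIrreducible S) :
    T = S := by
  set r := (spectralRadius ℝ S).toReal
  have hcomm' (x : X) : S (T x) = T (S x) := DFunLike.congr_fun hcomm x
  have hfS (x : X) : f₀ (S x) = r * f₀ x := DFunLike.congr_fun heig' x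
  have hf₀pos := hirr.strictlyPositiveFunc hS hf₀ hf₀0 heig'
  obtain ⟨t, hTx₀⟩ := hirr.exists_eq_smul_of_eigenvector hS hf₀pos ENNReal.toReal_nonneg hfS hx₀
    heig (z := T x₀) (by rw [hcomm', heig, map_smul])
  have hrt : r ≤ t := by
    have := monotone_of_map_nonneg hf₀ (hST x₀ hx₀.le)
    rw [hfS, hTx₀, map_smul, smul_eq_mul] at this
    exact le_of_mul_le_mul_right this (hf₀pos x₀ hx₀)
  have htr : t ≤ r := by
    have hT_ne_top : spectralRadius ℝ T ≠ ⊤ := hr ▸ hirr.spectralRadius_ne_top hS hx₀ heig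
    simpa [hr] using le_toReal_spectralRadius hT_ne_top (mem_spectrum_of_apply_eq_smul hx₀.ne' hTx₀)
  have hD : IsPositiveOp (T - S) := fun x hx => sub_nonneg.2 (hST x hx)
  refine sub_eq_zero.1 (hirr.eq_zero_of_commute hS hD (fun x => ?_) hx₀ ?_)
  · simp [hcomm']
  · simp [hTx₀, heig, le_antisymm htr hrt]

theorem stmt19 [NormedAddCommGroup X] [Lattice X] [IsOrderedAddMonoid X] [HasSolidNorm X]
    [NormedSpace ℝ X]
    (hdim : 1 < Module.rank ℝ X)
    (S T : X →L[ℝ] X) (hS : IsPositiveOp S)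
    (hST : ∀ x : X, 0 ≤ x → S x ≤ T x) (hT : IsPositiveOp T)
    (hr : spectralRadius ℝ T = spectralRadius ℝ S)
    (hcomm : S * T = T * S)
    (x₀ : X) (hx₀ : 0 < x₀)
    (heig : S x₀ = (spectralRadius ℝ S).toReal • x₀)
    (f₀ : StrongDual ℝ X) (hf₀ : IsPositiveFunc f₀) (hf₀0 : f₀ ≠ 0)
    (heig' : adjOp S f₀ = (spectralRadius ℝ S).toReal • f₀)
    (hirr : IdealIrreducible S) :
    T = S :=
  stmt19_general S T hS hST hr hcomm x₀ hx₀ heig f₀ hf₀ hf₀0 heig' hirr
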